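/- arXiv:0704.0378 — 3 statements merged into one kernel-verified Lean document; each statement's English description precedes it below -/
import Mathlib

section
/- Let a(z) = Σ_{k=−q}^{p} a_k z^k with a_p ≠ 0, a_{−q} ≠ 0, and let k ∈ {−q+1,…,p−1}. Define P_{k,n}(λ) = det T_n(z^{−k}(a − λ)), the determinant of the n×n Toeplitz matrix with symbol z^{−k}(a(z) − λ). Then P_{k,n} is a polynomial in λ of degree at most n(q+k)/q if k < 0 and at most n(p−k)/p if k > 0. -/
/-- Let `a(z) = Σ_{j=−q}^{p} a_j z^j` with `a_p ≠ 0`, `a_{−q} ≠ 0`, and let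
`k ∈ {−q+1,…,p−1}`.  The determinant `P_{k,n}(λ) = det T_n(z^{−k}(a − λ))` of the
`n×n` Toeplitz matrix with symbol `z^{−k}(a(z) − λ)`, whose `(i,j)` entry is
`(a−λ)_{i−j+k}`, is a polynomial in `λ` of degree at most `n(q+k)/q` if `k < 0`
and at most `n(p−k)/p` if `k > 0`. -/
theorem stmt8 (p q n : ℕ) (hp : 1 ≤ p) (hq : 1 ≤ q) (hn : 1 ≤ n)
    (a : ℤ → ℂ) (hsupp : ∀ j : ℤ, ((p : ℤ) < j ∨ j < -(q : ℤ)) → a j = 0)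
    (hap : a (p : ℤ) ≠ 0) (haq : a (-(q : ℤ)) ≠ 0)
    (k : ℤ) (hk1 : -(q : ℤ) + 1 ≤ k) (hk2 : k ≤ (p : ℤ) - 1)
    (P : Polynomial ℂ)
    (hP : P = Matrix.det (Matrix.of (fun i j : Fin n =>
      Polynomial.C (a (((i : ℕ) : ℤ) - ((j : ℕ) : ℤ) + k)) -
        if ((i : ℕ) : ℤ) - ((j : ℕ) : ℤ) + k = 0 then Polynomial.X else 0))) :
    (k < 0 → (P.natDegree : ℝ) ≤ (n : ℝ) * ((q : ℝ) + (k : ℝ)) / (q : ℝ)) ∧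
    (0 < k → (P.natDegree : ℝ) ≤ (n : ℝ) * ((p : ℝ) - (k : ℝ)) / (p : ℝ)) := by
  classical
  set M : Matrix (Fin n) (Fin n) (Polynomial ℂ) := Matrix.of (fun i j : Fin n =>
      Polynomial.C (a (((i : ℕ) : ℤ) - ((j : ℕ) : ℤ) + k)) -
        if ((i : ℕ) : ℤ) - ((j : ℕ) : ℤ) + k = 0 then Polynomial.X else 0) with hM
  -- key per-permutation bound
  have key : ∀ σ : Equiv.Perm (Fin n), (∏ i, M (σ i) i) ≠ 0 →
      ∃ d : ℕ, (∏ i, M (σ i) i).natDegree ≤ d ∧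
        (q : ℤ) * d ≤ n * ((q : ℤ) + k) ∧ (p : ℤ) * d ≤ n * ((p : ℤ) - k) := by
    intro σ hne
    have hent : ∀ i : Fin n, M (σ i) i ≠ 0 := by
      intro i h0
      exact hne (Finset.prod_eq_zero (Finset.mem_univ i) h0)
    set f : Fin n → ℤ := fun i => (((σ i : ℕ) : ℤ) - ((i : ℕ) : ℤ)) with hf
    have hrange : ∀ i : Fin n, -(q : ℤ) - k ≤ f i ∧ f i ≤ (p : ℤ) - k := by
      intro i
      by_cases h0 : (((σ i : ℕ) : ℤ) - ((i : ℕ) : ℤ) + k) = 0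
      · constructor <;> simp only [hf] <;> omega
      · have ha : a (((σ i : ℕ) : ℤ) - ((i : ℕ) : ℤ) + k) ≠ 0 := by
          intro hz
          apply hent i
          simp [hM, h0, hz]
        have hm : ¬ ((p : ℤ) < (((σ i : ℕ) : ℤ) - ((i : ℕ) : ℤ) + k) ∨
            (((σ i : ℕ) : ℤ) - ((i : ℕ) : ℤ) + k) < -(q : ℤ)) :=
          fun h => ha (hsupp _ h)
        push_neg at hm
        constructor <;> simp only [hf] <;> omega
    set D : Finset (Fin n) :=
      Finset.univ.filter (fun i : Fin n => (((σ i : ℕ) : ℤ) - ((i : ℕ) : ℤ) + k) = 0) with hD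
    have hsum : ∑ i : Fin n, (((σ i : ℕ) : ℤ) - ((i : ℕ) : ℤ)) = 0 := by
      have h1 := Equiv.sum_comp σ (fun i : Fin n => ((i : ℕ) : ℤ))
      simp only [Finset.sum_sub_distrib, h1, sub_self]
    refine ⟨D.card, ?_, ?_, ?_⟩
    · refine (Polynomial.natDegree_prod_le _ _).trans ?_
      have : ∀ i : Fin n, (M (σ i) i).natDegree ≤
          if (((σ i : ℕ) : ℤ) - ((i : ℕ) : ℤ) + k) = 0 then 1 else 0 := by
        intro i
        by_cases h0 : (((σ i : ℕ) : ℤ) - ((i : ℕ) : ℤ) + k) = 0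
        · simp only [h0, if_true, hM, Matrix.of_apply]
          refine (Polynomial.natDegree_sub_le _ _).trans ?_
          simp
        · simp [hM, h0]
      refine (Finset.sum_le_sum (fun i _ => this i)).trans ?_
      rw [Finset.sum_boole]
      simp [hD]
    · -- q bound
      have e1 : ∑ i : Fin n, (f i + ((q : ℤ) + k)) = (n : ℤ) * ((q : ℤ) + k) := by
        rw [Finset.sum_add_distrib]
        simp only [hf] at hsum ⊢
        rw [hsum, Finset.sum_const]
        simp only [Finset.card_univ, Fintype.card_fin, nsmul_eq_mul, zero_add]
        try ring
      have e2 : ∑ i ∈ D, (f i + ((q : ℤ) + k)) = (D.card : ℤ) * q := by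
        have : ∑ i ∈ D, (f i + ((q : ℤ) + k)) = ∑ i ∈ D, (q : ℤ) :=
          Finset.sum_congr rfl (fun i hi => by
            have h2 : (((σ i : ℕ) : ℤ) - ((i : ℕ) : ℤ) + k) = 0 := (Finset.mem_filter.mp hi).2
            simp only [hf]; omega)
        rw [this, Finset.sum_const, nsmul_eq_mul]
      have e3 : ∑ i ∈ D, (f i + ((q : ℤ) + k)) ≤ ∑ i : Fin n, (f i + ((q : ℤ) + k)) :=
        Finset.sum_le_sum_of_subset_of_nonneg (Finset.subset_univ _)
          (fun i _ _ => by have := (hrange i).1; omega)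
      rw [e1] at e3; rw [e2] at e3; linarith
    · -- p bound
      have e1 : ∑ i : Fin n, (((p : ℤ) - k) - f i) = (n : ℤ) * ((p : ℤ) - k) := by
        rw [Finset.sum_sub_distrib]
        simp only [hf] at hsum ⊢
        rw [hsum, Finset.sum_const]
        simp only [Finset.card_univ, Fintype.card_fin, nsmul_eq_mul, zero_add]
        try ring
      have e2 : ∑ i ∈ D, (((p : ℤ) - k) - f i) = (D.card : ℤ) * p := by
        have : ∑ i ∈ D, (((p : ℤ) - k) - f i) = ∑ i ∈ D, (p : ℤ) :=
          Finset.sum_congr rfl (fun i hi => by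
            have h2 : (((σ i : ℕ) : ℤ) - ((i : ℕ) : ℤ) + k) = 0 := (Finset.mem_filter.mp hi).2
            simp only [hf]; omega)
        rw [this, Finset.sum_const, nsmul_eq_mul]
      have e3 : ∑ i ∈ D, (((p : ℤ) - k) - f i) ≤ ∑ i : Fin n, (((p : ℤ) - k) - f i) :=
        Finset.sum_le_sum_of_subset_of_nonneg (Finset.subset_univ _)
          (fun i _ _ => by have := (hrange i).2; omega)
      rw [e1] at e3; rw [e2] at e3; linarith
  have hdet : P = ∑ σ : Equiv.Perm (Fin n),
      ((Equiv.Perm.sign σ : ℤ) : Polynomial ℂ) * ∏ i, M (σ i) i := by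
    rw [hP, Matrix.det_apply']
  have hq0 : 0 < q := hq
  have hp0 : 0 < p := hp
  constructor
  · intro hkneg
    set r : ℕ := ((q : ℤ) + k).toNat with hr
    have hrc : ((r : ℕ) : ℤ) = (q : ℤ) + k := Int.toNat_of_nonneg (by omega)
    have hdeg : P.natDegree ≤ (n * r) / q := by
      rw [hdet]
      apply Polynomial.natDegree_sum_le_of_forall_le
      intro σ _
      by_cases hne : (∏ i, M (σ i) i) = 0
      · simp [hne]
      · obtain ⟨d, hd1, hd2, _⟩ := key σ hne
        have hdm : d ≤ (n * r) / q := by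
          rw [Nat.le_div_iff_mul_le hq0]
          have h2 : ((d * q : ℕ) : ℤ) ≤ ((n * r : ℕ) : ℤ) := by
            push_cast
            rw [hrc]
            linarith
          exact_mod_cast h2
        calc (((Equiv.Perm.sign σ : ℤ) : Polynomial ℂ) * ∏ i, M (σ i) i).natDegree
            ≤ _ := Polynomial.natDegree_mul_le
          _ ≤ d := by simpa [Polynomial.natDegree_intCast] using hd1
          _ ≤ _ := hdm
    have hrr : ((r : ℕ) : ℝ) = (q : ℝ) + (k : ℝ) := by exact_mod_cast hrc
    calc (P.natDegree : ℝ) ≤ (((n * r) / q : ℕ) : ℝ) := by exact_mod_cast hdeg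
      _ ≤ ((n * r : ℕ) : ℝ) / (q : ℝ) := Nat.cast_div_le
      _ = (n : ℝ) * ((q : ℝ) + (k : ℝ)) / (q : ℝ) := by
          rw [Nat.cast_mul, hrr]
  · intro hkpos
    set r : ℕ := ((p : ℤ) - k).toNat with hr
    have hrc : ((r : ℕ) : ℤ) = (p : ℤ) - k := Int.toNat_of_nonneg (by omega)
    have hdeg : P.natDegree ≤ (n * r) / p := by
      rw [hdet]
      apply Polynomial.natDegree_sum_le_of_forall_le
      intro σ _
      by_cases hne : (∏ i, M (σ i) i) = 0
      · simp [hne]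
      · obtain ⟨d, hd1, _, hd3⟩ := key σ hne
        have hdm : d ≤ (n * r) / p := by
          rw [Nat.le_div_iff_mul_le hp0]
          have h2 : ((d * p : ℕ) : ℤ) ≤ ((n * r : ℕ) : ℤ) := by
            push_cast
            rw [hrc]
            linarith
          exact_mod_cast h2
        calc (((Equiv.Perm.sign σ : ℤ) : Polynomial ℂ) * ∏ i, M (σ i) i).natDegree
            ≤ _ := Polynomial.natDegree_mul_le
          _ ≤ d := by simpa [Polynomial.natDegree_intCast] using hd1
          _ ≤ _ := hdm
    have hrr : ((r : ℕ) : ℝ) = (p : ℝ) - (k : ℝ) := by exact_mod_cast hrc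
    calc (P.natDegree : ℝ) ≤ (((n * r) / p : ℕ) : ℝ) := by exact_mod_cast hdeg
      _ ≤ ((n * r : ℕ) : ℝ) / (p : ℝ) := Nat.cast_div_le
      _ = (n : ℝ) * ((p : ℝ) - (k : ℝ)) / (p : ℝ) := by
          rw [Nat.cast_mul, hrr]
end

section
/- Let a(z) = Σ_{k=−q}^{p} a_k z^k with a_p ≠ 0, let 1 ≤ k ≤ p−1, and suppose p divides n. Then the polynomial P_{k,n}(λ) = det T_n(z^{−k}(a−λ)) has exact degree n(p−k)/p, with leading coefficient (−1)^{(k+1)n} a_p^{kn/p}. -/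
open Polynomial Equiv

lemma finRotate_pow_val (p : ℕ) (hp : 0 < p) (m : ℕ) (j : Fin p) :
    (((finRotate p) ^ m) j : ℕ) = ((j : ℕ) + m) % p := by
  obtain ⟨p', rfl⟩ : ∃ p', p = p' + 1 := ⟨p - 1, by omega⟩
  induction m with
  | zero => simp [Nat.mod_eq_of_lt j.isLt]
  | succ m ih =>
    rw [pow_succ', Equiv.Perm.mul_apply, finRotate_succ_apply]
    have e1 : ((j : ℕ) + (m + 1)) % (p' + 1) = (((j : ℕ) + m) % (p' + 1) + 1) % (p' + 1) := by
      rw [Nat.mod_add_mod, Nat.add_assoc]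
    rw [Fin.val_add_one]
    split_ifs with h
    · have hval : (((finRotate (p' + 1)) ^ m) j : ℕ) = p' := by rw [h]; rfl
      rw [ih] at hval
      rw [e1, hval, Nat.mod_self]
    · have hne : ((j : ℕ) + m) % (p' + 1) ≠ p' := by
        intro hv
        apply h
        apply Fin.ext
        rw [ih, hv]
        rfl
      have hlt : ((j : ℕ) + m) % (p' + 1) < p' + 1 := Nat.mod_lt _ (Nat.succ_pos p')
      rw [e1, ih]
      exact (Nat.mod_eq_of_lt (by omega)).symm

lemma neg_one_pow_parity (A B : ℕ) (h : Even (A + B)) : ((-1 : ℂ)) ^ A = (-1) ^ B := by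
  rcases Nat.even_or_odd A with hA | hA
  · have hB : Even B := (Nat.even_add.mp h).mp hA
    rw [hA.neg_one_pow, hB.neg_one_pow]
  · have hB : Odd B := by
      rcases Nat.even_or_odd B with h1 | h1
      · exact absurd ((Nat.even_add.mp h).mpr h1) (Nat.not_even_iff_odd.mpr hA)
      · exact h1
    rw [hA.neg_one_pow, hB.neg_one_pow]

/-- Let `a(z) = Σ_{j=−q}^{p} a_j z^j` with `a_p ≠ 0`, let `1 ≤ k ≤ p−1`, and
suppose `p ∣ n`.  Then `P_{k,n}(λ) = det T_n(z^{−k}(a−λ))` has exact degree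
`n(p−k)/p` and leading coefficient `(−1)^{(k+1)n} a_p^{kn/p}`. -/
theorem stmt9 (p q n : ℕ) (hp : 1 ≤ p) (hq : 1 ≤ q) (hn : 1 ≤ n) (hpn : p ∣ n)
    (a : ℤ → ℂ) (hsupp : ∀ j : ℤ, ((p : ℤ) < j ∨ j < -(q : ℤ)) → a j = 0)
    (hap : a (p : ℤ) ≠ 0) (haq : a (-(q : ℤ)) ≠ 0)
    (k : ℕ) (hk1 : 1 ≤ k) (hk2 : k ≤ p - 1)
    (P : Polynomial ℂ)
    (hP : P = Matrix.det (Matrix.of (fun i j : Fin n =>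
      Polynomial.C (a (((i : ℕ) : ℤ) - ((j : ℕ) : ℤ) + (k : ℤ))) -
        if ((i : ℕ) : ℤ) - ((j : ℕ) : ℤ) + (k : ℤ) = 0 then Polynomial.X else 0))) :
    P.natDegree = (n / p) * (p - k) ∧
    P.leadingCoeff = (-1 : ℂ) ^ ((k + 1) * n) * (a (p : ℤ)) ^ ((n / p) * k) := by
  obtain ⟨N, hNp⟩ := hpn
  have hp0 : 0 < p := hp
  have hkp : k < p := by omega
  have hN1 : 1 ≤ N := by
    by_contra h
    have h0 : N = 0 := by omega
    rw [h0, Nat.mul_zero] at hNp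
    omega
  have hnp : n / p = N := by rw [hNp, Nat.mul_div_cancel_left _ hp0]
  set c := p - k with hc_def
  have hc1 : 1 ≤ c := by omega
  have hcp : c < p := by omega
  have hck : c + k = p := by omega
  set d := N * c with hd_def
  let M : Matrix (Fin n) (Fin n) ℂ[X] := Matrix.of (fun i j : Fin n =>
      Polynomial.C (a (((i : ℕ) : ℤ) - ((j : ℕ) : ℤ) + (k : ℤ))) -
        if ((i : ℕ) : ℤ) - ((j : ℕ) : ℤ) + (k : ℤ) = 0 then Polynomial.X else 0)
  have hPM : P = M.det := hP
  have hMij : ∀ i j : Fin n, M i j =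
      Polynomial.C (a (((i : ℕ) : ℤ) - ((j : ℕ) : ℤ) + (k : ℤ))) -
        if ((i : ℕ) : ℤ) - ((j : ℕ) : ℤ) + (k : ℤ) = 0 then Polynomial.X else 0 :=
    fun i j => rfl
  -- entry lemmas
  have hXentry : ∀ i j : Fin n, ((i : ℕ) : ℤ) - ((j : ℕ) : ℤ) + (k : ℤ) = 0 →
      M i j = Polynomial.C (a 0) - Polynomial.X := by
    intro i j h
    rw [hMij, h, if_pos rfl]
  have hCentry : ∀ i j : Fin n, ((i : ℕ) : ℤ) - ((j : ℕ) : ℤ) + (k : ℤ) ≠ 0 →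
      M i j = Polynomial.C (a (((i : ℕ) : ℤ) - ((j : ℕ) : ℤ) + (k : ℤ))) := by
    intro i j h
    rw [hMij, if_neg h, sub_zero]
  -- the special permutation
  let e : Fin N × Fin p ≃ Fin n := finProdFinEquiv.trans (finCongr (by rw [hNp, Nat.mul_comm] : N * p = n))
  let s : Equiv.Perm (Fin p) := (finRotate p) ^ c
  let π : Equiv.Perm (Fin n) := e.permCongr (Equiv.prodCongrRight (fun _ : Fin N => s))
  have heval : ∀ (m : Fin N) (j : Fin p), ((e (m, j) : ℕ)) = (j : ℕ) + p * (m : ℕ) := by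
    intro m j
    simp [e, finProdFinEquiv]
  have hesymm : ∀ i : Fin n, ((e.symm i).1 : ℕ) = (i : ℕ) / p ∧ ((e.symm i).2 : ℕ) = (i : ℕ) % p := by
    intro i
    constructor
    · simp [e, finProdFinEquiv, Fin.coe_divNat]
    · simp [e, finProdFinEquiv, Fin.coe_modNat]
  have hπval : ∀ i : Fin n, ((π i : ℕ)) = ((i : ℕ) % p + c) % p + p * ((i : ℕ) / p) := by
    intro i
    show ((e ((Equiv.prodCongrRight (fun _ : Fin N => s)) (e.symm i)) : ℕ)) = _
    rcases hesymm i with ⟨h1, h2⟩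
    rw [Equiv.prodCongrRight_apply, heval, h1]
    have : ((s (e.symm i).2 : ℕ)) = ((i : ℕ) % p + c) % p := by
      rw [show s = (finRotate p) ^ c from rfl, finRotate_pow_val p hp0, h2]
    rw [this]
  have hπlow : ∀ i : Fin n, (i : ℕ) % p + c < p → ((π i : ℕ) : ℤ) = ((i : ℕ) : ℤ) + (c : ℤ) := by
    intro i h
    have h1 := hπval i
    have h2 : ((i : ℕ) % p + c) % p = (i : ℕ) % p + c := Nat.mod_eq_of_lt h
    have h3 : p * ((i : ℕ) / p) + (i : ℕ) % p = (i : ℕ) := Nat.div_add_mod _ _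
    omega
  have hπhigh : ∀ i : Fin n, p ≤ (i : ℕ) % p + c → ((π i : ℕ) : ℤ) = ((i : ℕ) : ℤ) + (c : ℤ) - (p : ℤ) := by
    intro i h
    have h1 := hπval i
    have hm : (i : ℕ) % p < p := Nat.mod_lt _ hp0
    have h2 : ((i : ℕ) % p + c) % p = (i : ℕ) % p + c - p := by
      rw [Nat.mod_eq_sub_mod h]
      exact Nat.mod_eq_of_lt (by omega)
    have h3 : p * ((i : ℕ) / p) + (i : ℕ) % p = (i : ℕ) := Nat.div_add_mod _ _
    omega
  -- sum identity
  have hsum : ∀ σ : Equiv.Perm (Fin n), ∑ i : Fin n, (((σ i : ℕ) : ℤ) - ((i : ℕ) : ℤ)) = 0 := by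
    intro σ
    rw [Finset.sum_sub_distrib, Equiv.sum_comp σ (fun i : Fin n => ((i : ℕ) : ℤ)), sub_self]
  -- the counting lemma
  have hcount : ∀ σ : Equiv.Perm (Fin n),
      (∀ i : Fin n, ((σ i : ℕ) : ℤ) - ((i : ℕ) : ℤ) + (k : ℤ) ≤ (p : ℤ)) →
      (Finset.univ.filter (fun i : Fin n => ((σ i : ℕ) : ℤ) - ((i : ℕ) : ℤ) + (k : ℤ) = 0)).card ≤ d ∧
      ((Finset.univ.filter (fun i : Fin n => ((σ i : ℕ) : ℤ) - ((i : ℕ) : ℤ) + (k : ℤ) = 0)).card = d →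
        ∀ i : Fin n, ((σ i : ℕ) : ℤ) - ((i : ℕ) : ℤ) + (k : ℤ) = 0 ∨
          ((σ i : ℕ) : ℤ) - ((i : ℕ) : ℤ) + (k : ℤ) = (p : ℤ)) := by
    intro σ hle
    set w : Fin n → ℤ := fun i => (p : ℤ) - (((σ i : ℕ) : ℤ) - ((i : ℕ) : ℤ) + (k : ℤ)) with hw
    set S := Finset.univ.filter (fun i : Fin n => ((σ i : ℕ) : ℤ) - ((i : ℕ) : ℤ) + (k : ℤ) = 0) with hS
    have hw0 : ∀ i : Fin n, 0 ≤ w i := fun i => by simp [hw]; linarith [hle i]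
    have hwsum : ∑ i : Fin n, w i = (d : ℤ) * (p : ℤ) := by
      have h1 : ∑ i : Fin n, w i = (n : ℤ) * (p : ℤ) - ((∑ i : Fin n, (((σ i : ℕ) : ℤ) - ((i : ℕ) : ℤ))) + (n : ℤ) * (k : ℤ)) := by
        simp only [hw, Finset.sum_sub_distrib, Finset.sum_add_distrib, Finset.sum_const,
          Finset.card_univ, Fintype.card_fin, nsmul_eq_mul]
      rw [h1, hsum σ]
      have hcast1 : (n : ℤ) = (p : ℤ) * (N : ℤ) := by exact_mod_cast congrArg (Nat.cast : ℕ → ℤ) hNp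
      have hcast2 : ((d : ℕ) : ℤ) = (N : ℤ) * ((p : ℤ) - (k : ℤ)) := by
        have h5 : ((c : ℕ) : ℤ) = (p : ℤ) - (k : ℤ) := by omega
        rw [hd_def]
        push_cast
        rw [h5]
      rw [hcast1, hcast2]
      ring
    have hsplit : ∑ i ∈ S, w i + ∑ i ∈ Sᶜ, w i = (d : ℤ) * (p : ℤ) := by
      rw [Finset.sum_add_sum_compl, hwsum]
    have hSsum : ∑ i ∈ S, w i = (S.card : ℤ) * (p : ℤ) := by
      have hall : ∀ i ∈ S, w i = (p : ℤ) := by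
        intro i hi
        have h2 := (Finset.mem_filter.mp hi).2
        simp [hw, h2]
      rw [Finset.sum_congr rfl hall, Finset.sum_const, nsmul_eq_mul]
    have hcompl0 : 0 ≤ ∑ i ∈ Sᶜ, w i := Finset.sum_nonneg (fun i _ => hw0 i)
    have hcard : S.card ≤ d := by
      have h2 : (S.card : ℤ) * (p : ℤ) ≤ (d : ℤ) * (p : ℤ) := by omega
      have h3 : (S.card : ℤ) ≤ (d : ℤ) :=
        le_of_mul_le_mul_right h2 (by exact_mod_cast hp0)
      exact_mod_cast h3
    refine ⟨hcard, fun hEq i => ?_⟩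
    have hzero : ∑ i ∈ Sᶜ, w i = 0 := by
      rw [hEq] at hSsum
      omega
    by_cases hiS : i ∈ S
    · exact Or.inl (Finset.mem_filter.mp hiS).2
    · right
      have hwi : w i = 0 :=
        (Finset.sum_eq_zero_iff_of_nonneg (fun j _ => hw0 j)).mp hzero i (Finset.mem_compl.mpr hiS)
      simp [hw] at hwi
      omega
  -- uniqueness of the extremal permutation
  have huniq : ∀ σ : Equiv.Perm (Fin n),
      (∀ i : Fin n, ((σ i : ℕ) : ℤ) - ((i : ℕ) : ℤ) = (c : ℤ) ∨
        ((σ i : ℕ) : ℤ) - ((i : ℕ) : ℤ) = (c : ℤ) - (p : ℤ)) → σ = π := by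
    intro σ hσ
    have key : ∀ m : ℕ, ∀ i : Fin n, (i : ℕ) = m → σ i = π i := by
      intro m
      induction m using Nat.strong_induction_on with
      | _ m IH =>
        intro i him
        have hmod : (i : ℕ) % p < p := Nat.mod_lt _ hp0
        have hdm : p * ((i : ℕ) / p) + (i : ℕ) % p = (i : ℕ) := Nat.div_add_mod _ _
        by_cases hcase : (i : ℕ) % p + c < p
        · have hπi := hπlow i hcase
          rcases hσ i with h1 | h1
          · apply Fin.ext
            have : ((σ i : ℕ) : ℤ) = ((π i : ℕ) : ℤ) := by omega
            exact_mod_cast this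
          · exfalso
            have hip : p ≤ (i : ℕ) := by
              by_contra hlt
              push_neg at hlt
              have h4 : (i : ℕ) % p = (i : ℕ) := Nat.mod_eq_of_lt hlt
              have h5 : (0 : ℤ) ≤ ((σ i : ℕ) : ℤ) := Int.natCast_nonneg _
              omega
            have hjlt : (i : ℕ) - p < n := by omega
            set j : Fin n := ⟨(i : ℕ) - p, hjlt⟩ with hj
            have hjval : (j : ℕ) = (i : ℕ) - p := rfl
            have hjj := IH ((i : ℕ) - p) (by omega) j rfl
            have hjmod : (j : ℕ) % p = (i : ℕ) % p := by
              have h6 : (j : ℕ) + p = (i : ℕ) := by omega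
              rw [← h6, Nat.add_mod_right]
            have hπj := hπlow j (by rw [hjmod]; exact hcase)
            have hji : σ j = σ i := by
              rw [hjj]
              apply Fin.ext
              have h7 : ((π j : ℕ) : ℤ) = ((σ i : ℕ) : ℤ) := by
                rw [hπj]
                omega
              exact_mod_cast h7
            have h8 := σ.injective hji
            have h9 : (j : ℕ) = (i : ℕ) := congrArg Fin.val h8
            omega
        · push_neg at hcase
          have hπi := hπhigh i hcase
          rcases hσ i with h1 | h1
          swap
          · apply Fin.ext
            have : ((σ i : ℕ) : ℤ) = ((π i : ℕ) : ℤ) := by omega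
            exact_mod_cast this
          · exfalso
            set v : Fin n := π i with hv
            set j : Fin n := σ.symm v with hjdef
            have hjv : σ j = v := σ.apply_symm_apply v
            have hvval : ((v : ℕ) : ℤ) = ((i : ℕ) : ℤ) + (c : ℤ) - (p : ℤ) := hπi
            rcases hσ j with h2 | h2
            · rw [hjv] at h2
              have hjival : ((j : ℕ) : ℤ) = ((i : ℕ) : ℤ) - (p : ℤ) := by omega
              have hip : p ≤ (i : ℕ) := by
                have h5 : (0 : ℤ) ≤ ((j : ℕ) : ℤ) := Int.natCast_nonneg _
                omega
              have hjj := IH ((i : ℕ) - p) (by omega) j (by omega)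
              have hjmod : (j : ℕ) % p = (i : ℕ) % p := by
                have h6 : (j : ℕ) + p = (i : ℕ) := by omega
                rw [← h6, Nat.add_mod_right]
              have hπj := hπhigh j (by rw [hjmod]; exact hcase)
              have h7 : ((π j : ℕ) : ℤ) = ((v : ℕ) : ℤ) := by rw [← hjj, hjv]
              rw [hπj] at h7
              omega
            · rw [hjv] at h2
              have hjival : ((j : ℕ) : ℤ) = ((i : ℕ) : ℤ) := by omega
              have hji : j = i := Fin.ext (by exact_mod_cast hjival)
              rw [hji] at hjv
              have h7 : ((σ i : ℕ) : ℤ) = ((v : ℕ) : ℤ) := by rw [hjv]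
              omega
    exact Equiv.ext (fun i => key (i : ℕ) i rfl)
  -- nonzero entries force the support bound
  have hvle : ∀ σ : Equiv.Perm (Fin n), (∀ i : Fin n, M (σ i) i ≠ 0) →
      ∀ i : Fin n, ((σ i : ℕ) : ℤ) - ((i : ℕ) : ℤ) + (k : ℤ) ≤ (p : ℤ) := by
    intro σ hz i
    by_contra hgt
    push_neg at hgt
    apply hz i
    rw [hCentry _ _ (by omega), hsupp _ (Or.inl (by omega)), map_zero]
  -- degree bound for each term
  have hdegS : ∀ σ : Equiv.Perm (Fin n), (∀ i : Fin n, M (σ i) i ≠ 0) →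
      (∏ i : Fin n, M (σ i) i).natDegree ≤
        (Finset.univ.filter (fun i : Fin n => ((σ i : ℕ) : ℤ) - ((i : ℕ) : ℤ) + (k : ℤ) = 0)).card := by
    intro σ hz
    refine (Polynomial.natDegree_prod_le _ _).trans ?_
    rw [Finset.card_filter]
    apply Finset.sum_le_sum
    intro i _
    by_cases hi : ((σ i : ℕ) : ℤ) - ((i : ℕ) : ℤ) + (k : ℤ) = 0
    · rw [if_pos hi, hXentry _ _ hi]
      refine (Polynomial.natDegree_sub_le _ _).trans ?_
      simp
    · rw [if_neg hi, hCentry _ _ hi, Polynomial.natDegree_C]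
  have hdeg : ∀ σ : Equiv.Perm (Fin n), (∏ i : Fin n, M (σ i) i).natDegree ≤ d := by
    intro σ
    by_cases hz : ∀ i : Fin n, M (σ i) i ≠ 0
    · exact (hdegS σ hz).trans (hcount σ (hvle σ hz)).1
    · push_neg at hz
      obtain ⟨i, hi⟩ := hz
      rw [Finset.prod_eq_zero (f := fun j : Fin n => M (σ j) j) (Finset.mem_univ i) hi, Polynomial.natDegree_zero]
      exact Nat.zero_le _
  -- vanishing of coefficient d for non-extremal permutations
  have hcoeff0 : ∀ σ : Equiv.Perm (Fin n), σ ≠ π → (∏ i : Fin n, M (σ i) i).coeff d = 0 := by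
    intro σ hne
    by_cases hz : ∀ i : Fin n, M (σ i) i ≠ 0
    · have hb := hvle σ hz
      rcases lt_or_eq_of_le (hcount σ hb).1 with hlt | heq
      · exact Polynomial.coeff_eq_zero_of_natDegree_lt (lt_of_le_of_lt (hdegS σ hz) hlt)
      · exfalso
        apply hne
        apply huniq σ
        intro i
        rcases (hcount σ hb).2 heq i with h1 | h1
        · right
          omega
        · left
          omega
    · push_neg at hz
      obtain ⟨i, hi⟩ := hz
      rw [Finset.prod_eq_zero (f := fun j : Fin n => M (σ j) j) (Finset.mem_univ i) hi, Polynomial.coeff_zero]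
  -- the entries along π
  have hπentry : ∀ i : Fin n,
      M (π i) i = if (i : ℕ) % p + c < p then Polynomial.C (a (p : ℤ)) else Polynomial.C (a 0) - Polynomial.X := by
    intro i
    split_ifs with h
    · have hv := hπlow i h
      have hvk : ((π i : ℕ) : ℤ) - ((i : ℕ) : ℤ) + (k : ℤ) = (p : ℤ) := by omega
      rw [hCentry _ _ (by omega), hvk]
    · push_neg at h
      have hv := hπhigh i h
      exact hXentry _ _ (by omega)
  -- the product over π
  have hprod : ∏ i : Fin n, M (π i) i =
      (Polynomial.C (a (p : ℤ)) ^ k * (Polynomial.C (a 0) - Polynomial.X) ^ c) ^ N := by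
    rw [← Equiv.prod_comp e (fun i => M (π i) i), Fintype.prod_prod_type]
    have hinner : ∀ m : Fin N, ∏ j : Fin p, M (π (e (m, j))) (e (m, j)) =
        Polynomial.C (a (p : ℤ)) ^ k * (Polynomial.C (a 0) - Polynomial.X) ^ c := by
      intro m
      have hstep : ∀ j : Fin p, M (π (e (m, j))) (e (m, j)) =
          (fun jj : ℕ => if jj + c < p then Polynomial.C (a (p : ℤ)) else Polynomial.C (a 0) - Polynomial.X) (j : ℕ) := by
        intro j
        have hm : ((e (m, j) : ℕ)) % p = (j : ℕ) := by
          rw [heval]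
          rw [Nat.add_mul_mod_self_left]
          exact Nat.mod_eq_of_lt j.isLt
        rw [hπentry, hm]
      rw [Finset.prod_congr rfl (fun j _ => hstep j)]
      rw [Fin.prod_univ_eq_prod_range
        (fun jj : ℕ => if jj + c < p then Polynomial.C (a (p : ℤ)) else Polynomial.C (a 0) - Polynomial.X) p]
      rw [show p = k + c by omega, Finset.prod_range_add]
      congr 1
      · rw [Finset.prod_congr rfl (fun x hx => ?_), Finset.prod_const, Finset.card_range]
        rw [if_pos (by have := Finset.mem_range.mp hx; omega)]
      · rw [Finset.prod_congr rfl (fun x hx => ?_), Finset.prod_const, Finset.card_range]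
        rw [if_neg (by omega)]
    rw [Finset.prod_congr rfl (fun m _ => hinner m), Finset.prod_const, Finset.card_univ,
      Fintype.card_fin]
  -- sign of π
  have hsign : ((Equiv.Perm.sign π : ℤ) : ℂ) = (-1 : ℂ) ^ ((p - 1) * c * N) := by
    have h1 : Equiv.Perm.sign π = (Equiv.Perm.sign s) ^ N := by
      rw [show π = e.permCongr (Equiv.prodCongrRight (fun _ : Fin N => s)) from rfl]
      rw [Equiv.Perm.sign_permCongr, Equiv.Perm.sign_prodCongrRight]
      rw [Finset.prod_const, Finset.card_univ, Fintype.card_fin]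
    have h3 : Equiv.Perm.sign (finRotate p) = (-1 : ℤˣ) ^ (p - 1) := by
      obtain ⟨p', hp'⟩ : ∃ p', p = p' + 1 := ⟨p - 1, by omega⟩
      rw [hp', sign_finRotate]
    have h2 : Equiv.Perm.sign s = (-1 : ℤˣ) ^ ((p - 1) * c) := by
      rw [show s = (finRotate p) ^ c from rfl, map_pow, h3, ← pow_mul]
    rw [h1, h2, ← pow_mul]
    push_cast
    norm_num
  -- determinant expansion
  have hdet : P = ∑ σ : Equiv.Perm (Fin n),
      ((Equiv.Perm.sign σ : ℤ) : ℂ[X]) * ∏ i : Fin n, M (σ i) i := by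
    rw [hPM, Matrix.det_apply']
  -- parity computation
  have hEven : Even ((p - 1) * c * N + c * N + (k + 1) * n) := by
    have hp1 : p - 1 + 1 = p := by omega
    have hstep : (p - 1) * c * N + c * N + (k + 1) * n = (p + 1) * (p * N) := by
      calc (p - 1) * c * N + c * N + (k + 1) * n
          = ((p - 1) + 1) * (c * N) + (k + 1) * (p * N) := by rw [hNp]; ring
        _ = p * (c * N) + (k + 1) * (p * N) := by rw [hp1]
        _ = (c + (k + 1)) * (p * N) := by ring
        _ = (p + 1) * (p * N) := by rw [show c + (k + 1) = p + 1 by omega]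
    rw [hstep, show (p + 1) * (p * N) = (p * (p + 1)) * N by ring]
    exact (Nat.even_mul_succ_self p).mul_right N
  have hker : ((-1 : ℂ)) ^ ((p - 1) * c * N) * ((-1 : ℂ)) ^ (c * N) = (-1 : ℂ) ^ ((k + 1) * n) := by
    rw [← pow_add]
    exact neg_one_pow_parity _ _ hEven
  -- the coefficient of degree d
  have hPd : P.coeff d = (-1 : ℂ) ^ ((k + 1) * n) * (a (p : ℤ)) ^ (N * k) := by
    rw [hdet, Polynomial.finset_sum_coeff]
    have hsingle : ∑ σ : Equiv.Perm (Fin n),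
        (((Equiv.Perm.sign σ : ℤ) : ℂ[X]) * ∏ i : Fin n, M (σ i) i).coeff d =
        (((Equiv.Perm.sign π : ℤ) : ℂ[X]) * ∏ i : Fin n, M (π i) i).coeff d := by
      apply Finset.sum_eq_single π
      · intro σ _ hne
        rw [← Polynomial.C_eq_intCast, Polynomial.coeff_C_mul, hcoeff0 σ hne, mul_zero]
      · intro h
        exact absurd (Finset.mem_univ π) h
    rw [hsingle, ← Polynomial.C_eq_intCast, Polynomial.coeff_C_mul, hprod]
    rw [mul_pow, ← pow_mul, ← pow_mul, ← map_pow, Polynomial.coeff_C_mul]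
    rw [show (Polynomial.C (a 0) - Polynomial.X) = -(Polynomial.X - Polynomial.C (a 0)) by ring]
    rw [neg_pow]
    rw [show ((-1 : ℂ[X]) ^ (c * N)) = Polynomial.C ((-1 : ℂ) ^ (c * N)) by
      rw [map_pow, map_neg, map_one]]
    rw [Polynomial.coeff_C_mul]
    have hmon : ((Polynomial.X - Polynomial.C (a 0)) ^ (c * N)).coeff d = 1 := by
      have h1 : ((Polynomial.X - Polynomial.C (a 0)) ^ (c * N)).natDegree = c * N := by
        rw [Polynomial.natDegree_pow, Polynomial.natDegree_X_sub_C, mul_one]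
      have h2 := ((Polynomial.monic_X_sub_C (a 0)).pow (c * N)).coeff_natDegree
      rw [h1] at h2
      rw [show d = c * N from Nat.mul_comm N c]
      exact h2
    rw [hmon, mul_one, hsign]
    rw [show k * N = N * k from Nat.mul_comm k N, ← hker]
    ring
  -- degree bound
  have hdegP : P.natDegree ≤ d := by
    rw [hdet]
    refine Polynomial.natDegree_sum_le_of_forall_le _ _ (fun σ _ => ?_)
    rw [← Polynomial.C_eq_intCast]
    exact (Polynomial.natDegree_C_mul_le _ _).trans (hdeg σ)
  have hL : (-1 : ℂ) ^ ((k + 1) * n) * (a (p : ℤ)) ^ (N * k) ≠ 0 :=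
    mul_ne_zero (pow_ne_zero _ (by norm_num)) (pow_ne_zero _ hap)
  have hPne : P.coeff d ≠ 0 := by rw [hPd]; exact hL
  have hdeq : P.natDegree = d := le_antisymm hdegP (Polynomial.le_natDegree_of_ne_zero hPne)
  refine ⟨?_, ?_⟩
  · rw [hdeq, hnp]
  · rw [Polynomial.leadingCoeff, hdeq, hPd, hnp]
end

section
/- Let a(z) = (4/27)(z+1)³/z and λ ∈ ℂ not a branch point (λ ∉ {0,1}). If y₁ ≠ y₂ are roots of a(z) = λ with |y₁| = |y₂|, then y₂ = conj(y₁) and λ is real. -/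
/-- For `a(z) = 4(z+1)³/(27z)` and `λ` not a branch point (`λ ∉ {0,1}`): if
`y₁ ≠ y₂` are roots of `a(z) = λ` (equivalently `4(y+1)³ = 27λy`) of equal
modulus, then `y₂ = conj(y₁)` and `λ` is real. -/
theorem stmt11 (lam : ℂ) (h0 : lam ≠ 0) (h1 : lam ≠ 1) (y₁ y₂ : ℂ) (hne : y₁ ≠ y₂)
    (e₁ : 4 * (y₁ + 1) ^ 3 = 27 * lam * y₁)
    (e₂ : 4 * (y₂ + 1) ^ 3 = 27 * lam * y₂)
    (habs : ‖y₁‖ = ‖y₂‖) :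
    y₂ = (starRingEnd ℂ) y₁ ∧ lam.im = 0 := by
  have hy1 : y₁ ≠ 0 := by
    intro h
    rw [h] at e₁
    norm_num at e₁
  have a1 := congrArg norm e₁
  have a2 := congrArg norm e₂
  simp only [norm_mul, norm_pow] at a1 a2
  have h4 : ‖(4:ℂ)‖ = 4 := by norm_num
  have h27 : ‖(27:ℂ)‖ = 27 := by norm_num
  rw [h4, h27] at a1 a2
  have hcube : (‖y₁ + 1‖) ^ 3 = (‖y₂ + 1‖) ^ 3 := by
    rw [habs] at a1
    nlinarith [a1, a2]
  have habs' : ‖y₁ + 1‖ = ‖y₂ + 1‖ :=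
    (pow_left_inj₀ (norm_nonneg _) (norm_nonneg _) (by norm_num : (3:ℕ) ≠ 0)).mp
      hcube
  have n1 : y₁.re ^ 2 + y₁.im ^ 2 = y₂.re ^ 2 + y₂.im ^ 2 := by
    have h := congrArg Complex.normSq (congrArg (fun x => x) rfl : y₁ = y₁)
    have hn : Complex.normSq y₁ = Complex.normSq y₂ := by
      rw [← Complex.sq_norm, ← Complex.sq_norm, habs]
    simpa [Complex.normSq_apply, sq] using hn
  have n2 : (y₁.re + 1) ^ 2 + y₁.im ^ 2 = (y₂.re + 1) ^ 2 + y₂.im ^ 2 := by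
    have hn : Complex.normSq (y₁ + 1) = Complex.normSq (y₂ + 1) := by
      rw [← Complex.sq_norm, ← Complex.sq_norm, habs']
    simpa [Complex.normSq_apply, Complex.add_re, Complex.add_im, sq] using hn
  have hre : y₁.re = y₂.re := by nlinarith [n1, n2]
  have him2 : y₁.im ^ 2 = y₂.im ^ 2 := by nlinarith [n1]
  have him : y₂.im = -y₁.im := by
    rcases pow_eq_pow_iff_of_ne_zero (by norm_num : (2:ℕ) ≠ 0) |>.mp him2 with h | ⟨h, _⟩
    · exact absurd (Complex.ext hre h) hne
    · linarith
  have hconj : y₂ = (starRingEnd ℂ) y₁ := by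
    apply Complex.ext
    · simpa [Complex.conj_re] using hre.symm
    · simpa [Complex.conj_im] using him
  refine ⟨hconj, ?_⟩
  have ce₁ := congrArg (starRingEnd ℂ) e₁
  simp only [map_mul, map_pow, map_add, map_one, map_ofNat] at ce₁
  rw [hconj] at e₂
  have hlam : lam = (starRingEnd ℂ) lam := by
    have hy1c : (starRingEnd ℂ) y₁ ≠ 0 := by simpa using hy1
    have key : 27 * (starRingEnd ℂ) lam * (starRingEnd ℂ) y₁
        = 27 * lam * (starRingEnd ℂ) y₁ := by
      rw [← ce₁, e₂]
    have h27' := mul_right_cancel₀ hy1c key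
    have : (starRingEnd ℂ) lam = lam :=
      mul_left_cancel₀ (by norm_num : (27:ℂ) ≠ 0) h27'
    exact this.symm
  have := congrArg Complex.im hlam
  simp [Complex.conj_im] at this
  linarith
end
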